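/- For all 0 ≤ m ≤ p and all j ∈ {-p,…,p}, the matrix G^{(m)} satisfies G^{(m)}_{j,j} = 1 and G^{(m)}_{j,-j} = 1. -/

import Mathlib

open scoped Classical
open Finset

noncomputable section

/-- Bit strings in {±1}^{2p+1}, indexed by integers -p ≤ j ≤ p (Bool-encoded). -/
def QStr (p : ℕ) : Type := {j : ℤ // j ∈ Finset.Icc (-(p : ℤ)) (p : ℤ)} → Bool

instance (p : ℕ) : Fintype (QStr p) := by unfold QStr; infer_instance
instance (p : ℕ) : DecidableEq (QStr p) := by unfold QStr; infer_instance

/-- The ±1 entry of the string `a` at index `j` (1 outside the index range). -/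
def ent (p : ℕ) (a : QStr p) (j : ℤ) : ℝ :=
  if h : j ∈ Finset.Icc (-(p : ℤ)) (p : ℤ) then (if a ⟨j, h⟩ then 1 else -1) else 1

/-- Transfer matrix element ⟨x|e^{iβX}|y⟩ = cos β if x = y, i sin β otherwise. -/
def bket (x y : ℝ) (β : ℝ) : ℂ :=
  if x = y then (Real.cos β : ℂ) else Complex.I * (Real.sin β : ℂ)

/-- f(a) = (1/2)⟨a₁|e^{iβ₁X}|a₂⟩⋯⟨a_p|e^{iβ_pX}|a₀⟩⟨a₀|e^{-iβ_pX}|a_{-p}⟩⋯⟨a_{-2}|e^{-iβ₁X}|a_{-1}⟩. -/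
def fQ (p : ℕ) (β : ℕ → ℝ) (a : QStr p) : ℂ :=
  (1 / 2 : ℂ) * ∏ r ∈ Finset.Icc 1 p,
    (bket (ent p a (r : ℤ)) (ent p a (if r = p then 0 else (r : ℤ) + 1)) (β r) *
      bket (ent p a (if r = p then 0 else -((r : ℤ) + 1))) (ent p a (-(r : ℤ))) (-(β r)))

/-- Γ_r = γ_r, Γ₀ = 0, Γ_{-r} = -γ_r. -/
def Gam (γ : ℕ → ℝ) (j : ℤ) : ℝ :=
  if 0 < j then γ j.toNat else if j < 0 then -(γ (-j).toNat) else 0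

/-- Γ·(ab) = Σ_{j=-p}^{p} Γ_j a_j b_j. -/
def Gdot (p : ℕ) (γ : ℕ → ℝ) (a b : QStr p) : ℝ :=
  ∑ j ∈ Finset.Icc (-(p : ℤ)) (p : ℤ), Gam γ j * ent p a j * ent p b j

/-- a ∈ B₀ iff a_{-r} = a_r for all 1 ≤ r ≤ p. -/
def symB (p : ℕ) (a : QStr p) : Prop :=
  ∀ r ∈ Finset.Icc (1 : ℤ) (p : ℤ), ent p a (-r) = ent p a r

/-- T(a): the largest 1 ≤ r ≤ p with a_r ≠ a_{-r}, and 0 for a ∈ B₀. -/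
def Tof (p : ℕ) (a : QStr p) : ℤ :=
  WithBot.unbotD 0 (((Finset.Icc (1 : ℤ) (p : ℤ)).filter (fun r => ent p a r ≠ ent p a (-r))).max)

/-- The string a' : negate entries with 1 ≤ |j| ≤ T(a), keep the rest. -/
def primeQ (p : ℕ) (a : QStr p) : QStr p :=
  fun j => if 1 ≤ |j.1| ∧ |j.1| ≤ Tof p a then !(a j) else a j

/-- Entrywise negation -a. -/
def negQ (p : ℕ) (a : QStr p) : QStr p := fun j => !(a j)

/-- Index reversal ā, with ā_j = a_{-j}. -/
def revQ (p : ℕ) (a : QStr p) : QStr p :=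
  fun j => a ⟨-j.1, by have h := j.2; simp only [Finset.mem_Icc] at h ⊢; omega⟩

/-- The finite-D iteration (cosine form):
H_D^{(0)}(a) = 1, H_D^{(m)}(a) = (Σ_b f(b) H_D^{(m-1)}(b) cos[(1/√D) Γ·(ab)])^D. -/
def HD (p : ℕ) (β γ : ℕ → ℝ) (D : ℕ) : ℕ → QStr p → ℂ
  | 0, _ => 1
  | m + 1, a =>
      (∑ b : QStr p, fQ p β b * HD p β γ D m b *
        (Real.cos ((1 / Real.sqrt D) * Gdot p γ a b) : ℂ)) ^ D

/-- The finite-D iteration (exponential form):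
H_D^{(0)}(a) = 1, H_D^{(m)}(a) = (Σ_b f(b) H_D^{(m-1)}(b) exp[-(i/√D) Γ·(ab)])^D. -/
def HDexp (p : ℕ) (β γ : ℕ → ℝ) (D : ℕ) : ℕ → QStr p → ℂ
  | 0, _ => 1
  | m + 1, a =>
      (∑ b : QStr p, fQ p β b * HDexp p β γ D m b *
        Complex.exp (-(Complex.I / (Real.sqrt D : ℂ)) * (Gdot p γ a b : ℂ))) ^ D

/-- The D → ∞ iteration: H^{(0)}(a) = 1,
H^{(m)}(a) = exp(-(1/2) Σ_b f(b) H^{(m-1)}(b) (Γ·(ab))²). -/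
def Hinf (p : ℕ) (β γ : ℕ → ℝ) : ℕ → QStr p → ℂ
  | 0, _ => 1
  | m + 1, a =>
      Complex.exp (-(1 / 2 : ℂ) *
        ∑ b : QStr p, fQ p β b * Hinf p β γ m b * ((Gdot p γ a b) ^ 2 : ℝ))

/-- G^{(m)}_{j,k} = Σ_a f(a) H^{(m)}(a) a_j a_k, with H^{(m)} the D → ∞ iterates. -/
def GmatH (p : ℕ) (β γ : ℕ → ℝ) (m : ℕ) (j k : ℤ) : ℂ :=
  ∑ a : QStr p, fQ p β a * Hinf p β γ m a * (ent p a j : ℂ) * (ent p a k : ℂ)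

/-- The recursively-defined G matrices: G^{(0)}_{j,k} = Σ_a f(a) a_j a_k and
G^{(m)}_{j,k} = Σ_a f(a) a_j a_k exp(-(1/2) Σ_{j',k'} G^{(m-1)}_{j',k'} Γ_{j'} Γ_{k'} a_{j'} a_{k'}). -/
def GmatR (p : ℕ) (β γ : ℕ → ℝ) : ℕ → ℤ → ℤ → ℂ
  | 0, j, k => ∑ a : QStr p, fQ p β a * (ent p a j : ℂ) * (ent p a k : ℂ)
  | m + 1, j, k =>
      ∑ a : QStr p, fQ p β a * (ent p a j : ℂ) * (ent p a k : ℂ) *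
        Complex.exp (-(1 / 2 : ℂ) *
          ∑ j' ∈ Finset.Icc (-(p : ℤ)) (p : ℤ), ∑ k' ∈ Finset.Icc (-(p : ℤ)) (p : ℤ),
            GmatR p β γ m j' k' * (Gam γ j' : ℂ) * (Gam γ k' : ℂ) *
              (ent p a j' : ℂ) * (ent p a k' : ℂ))

/-- H^{(m+1)}(a) expressed through G^{(m)}:
H^{(m+1)}(a) = exp(-(1/2) Σ_{j',k'} G^{(m)}_{j',k'} Γ_{j'} Γ_{k'} a_{j'} a_{k'}). -/
def HG (p : ℕ) (β γ : ℕ → ℝ) (m : ℕ) (a : QStr p) : ℂ :=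
  Complex.exp (-(1 / 2 : ℂ) *
    ∑ j' ∈ Finset.Icc (-(p : ℤ)) (p : ℤ), ∑ k' ∈ Finset.Icc (-(p : ℤ)) (p : ℤ),
      GmatR p β γ m j' k' * (Gam γ j' : ℂ) * (Gam γ k' : ℂ) *
        (ent p a j' : ℂ) * (ent p a k' : ℂ))

end

/- ======================= auxiliary development ======================= -/

noncomputable section Aux

variable (p : ℕ) (β γ : ℕ → ℝ)

lemma ent_cases (a : QStr p) (j : ℤ) : ent p a j = 1 ∨ ent p a j = -1 := by
  unfold ent
  split_ifs <;> simp

lemma ent_mul_self (a : QStr p) (j : ℤ) : ent p a j * ent p a j = 1 := by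
  rcases ent_cases p a j with h | h <;> rw [h] <;> norm_num

lemma ent_neg_of_ne {a : QStr p} {i j : ℤ} (h : ent p a i ≠ ent p a j) :
    ent p a j = -ent p a i := by
  rcases ent_cases p a i with h1 | h1 <;> rcases ent_cases p a j with h2 | h2 <;>
    rw [h1, h2] at h ⊢ <;> norm_num at h <;> norm_num

/-- The discrepancy set of a string. -/
def dset (a : QStr p) : Finset ℤ :=
  (Finset.Icc (1 : ℤ) (p : ℤ)).filter (fun r => ent p a r ≠ ent p a (-r))

lemma Tof_eq (a : QStr p) : Tof p a = WithBot.unbotD 0 ((dset p a).max) := rfl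

lemma symB_iff_dset (a : QStr p) : symB p a ↔ dset p a = ∅ := by
  constructor
  · intro h
    apply Finset.filter_eq_empty_iff.2
    intro r hr
    simp only [ne_eq, not_not]
    exact (h r hr).symm
  · intro h r hr
    have hnot : r ∉ dset p a := by rw [h]; exact Finset.notMem_empty r
    rw [dset, Finset.mem_filter] at hnot
    push_neg at hnot
    exact (hnot hr).symm

lemma Tof_spec (a : QStr p) (h : ¬ symB p a) :
    Tof p a ∈ Finset.Icc (1 : ℤ) (p : ℤ) ∧ ent p a (Tof p a) ≠ ent p a (-(Tof p a)) := by
  have hne : (dset p a).Nonempty := by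
    rw [Finset.nonempty_iff_ne_empty]
    intro hemp
    exact h ((symB_iff_dset p a).2 hemp)
  obtain ⟨m, hm⟩ := Finset.max_of_nonempty hne
  have hmem := Finset.mem_of_max hm
  rw [dset, Finset.mem_filter] at hmem
  have ht : Tof p a = m := by rw [Tof_eq, hm, WithBot.unbotD_coe]
  rw [ht]
  exact hmem

lemma Tof_nonneg (a : QStr p) : 0 ≤ Tof p a := by
  by_cases h : symB p a
  · rw [Tof_eq, (symB_iff_dset p a).1 h, Finset.max_empty, WithBot.unbotD_bot]
  · have := (Tof_spec p a h).1
    rw [Finset.mem_Icc] at this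
    omega

lemma Tof_le (a : QStr p) : Tof p a ≤ (p : ℤ) := by
  by_cases h : symB p a
  · rw [Tof_eq, (symB_iff_dset p a).1 h, Finset.max_empty, WithBot.unbotD_bot]
    positivity
  · have := (Tof_spec p a h).1
    rw [Finset.mem_Icc] at this
    omega

lemma Tof_eq_zero_iff (a : QStr p) : Tof p a = 0 ↔ symB p a := by
  constructor
  · intro h0
    by_contra h
    have := (Tof_spec p a h).1
    rw [Finset.mem_Icc, h0] at this
    omega
  · intro h
    rw [Tof_eq, (symB_iff_dset p a).1 h, Finset.max_empty, WithBot.unbotD_bot]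

lemma Tof_lt_imp (a : QStr p) {r : ℤ} (hr : r ∈ Finset.Icc (1 : ℤ) (p : ℤ))
    (h : Tof p a < r) : ent p a r = ent p a (-r) := by
  by_contra hne
  have hrs : r ∈ dset p a := Finset.mem_filter.2 ⟨hr, hne⟩
  have hle := Finset.le_max hrs
  obtain ⟨m, hm⟩ := Finset.max_of_nonempty ⟨r, hrs⟩
  rw [hm, WithBot.coe_le_coe] at hle
  rw [Tof_eq, hm, WithBot.unbotD_coe] at h
  omega

lemma ent_eq_of_gt (a : QStr p) {j : ℤ} (hj : |j| ≤ (p : ℤ)) (h : Tof p a < |j|) :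
    ent p a (-j) = ent p a j := by
  rcases lt_trichotomy j 0 with hj0 | hj0 | hj0
  · have h1 : (-j) ∈ Finset.Icc (1:ℤ) (p:ℤ) := by
      rw [Finset.mem_Icc]
      rw [abs_of_neg hj0] at hj
      omega
    have h2 : Tof p a < -j := by rwa [abs_of_neg hj0] at h
    have h3 := Tof_lt_imp p a h1 h2
    rw [neg_neg] at h3
    exact h3
  · subst hj0; rw [neg_zero]
  · have h1 : j ∈ Finset.Icc (1:ℤ) (p:ℤ) := by
      rw [Finset.mem_Icc]
      rw [abs_of_pos hj0] at hj
      omega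
    have h2 : Tof p a < j := by rwa [abs_of_pos hj0] at h
    exact (Tof_lt_imp p a h1 h2).symm

lemma ent_out (a : QStr p) {j : ℤ} (hj : ¬ (|j| ≤ (p:ℤ))) : ent p a j = 1 := by
  have hmem : j ∉ Finset.Icc (-(p:ℤ)) (p:ℤ) := by
    rw [Finset.mem_Icc]
    intro hc
    exact hj (abs_le.2 hc)
  unfold ent
  rw [dif_neg hmem]

lemma symB_ent_neg {a : QStr p} (h : symB p a) (j : ℤ) : ent p a (-j) = ent p a j := by
  by_cases hj : |j| ≤ (p:ℤ)
  · rcases lt_trichotomy j 0 with h0 | h0 | h0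
    · have h1 : (-j) ∈ Finset.Icc (1:ℤ) (p:ℤ) := by
        rw [Finset.mem_Icc]
        rw [abs_of_neg h0] at hj
        omega
      have h2 := h (-j) h1
      rw [neg_neg] at h2
      exact h2.symm
    · subst h0; rw [neg_zero]
    · have h1 : j ∈ Finset.Icc (1:ℤ) (p:ℤ) := by
        rw [Finset.mem_Icc]
        rw [abs_of_pos h0] at hj
        omega
      exact h j h1
  · rw [ent_out p a hj, ent_out p a (by rwa [abs_neg])]

lemma ent_prime (a : QStr p) (j : ℤ) :
    ent p (primeQ p a) j =
      if 1 ≤ |j| ∧ |j| ≤ Tof p a then -ent p a j else ent p a j := by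
  by_cases hj : j ∈ Finset.Icc (-(p:ℤ)) (p:ℤ)
  · unfold ent primeQ
    rw [dif_pos hj, dif_pos hj]
    by_cases hw : 1 ≤ |j| ∧ |j| ≤ Tof p a
    · rw [if_pos hw, if_pos hw]
      cases a ⟨j, hj⟩ <;> norm_num
    · rw [if_neg hw, if_neg hw]
  · have habs : ¬ (|j| ≤ (p:ℤ)) := by
      intro hc
      exact hj (by rw [Finset.mem_Icc]; exact abs_le.1 hc)
    rw [if_neg (by
      rintro ⟨-, h2⟩
      exact habs (h2.trans (Tof_le p a)))]
    unfold ent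
    rw [dif_neg hj, dif_neg hj]

lemma ent_prime_in (a : QStr p) {j : ℤ} (hw : 1 ≤ |j| ∧ |j| ≤ Tof p a) :
    ent p (primeQ p a) j = - ent p a j := by
  rw [ent_prime, if_pos hw]

lemma ent_prime_out (a : QStr p) {j : ℤ} (hw : ¬ (1 ≤ |j| ∧ |j| ≤ Tof p a)) :
    ent p (primeQ p a) j = ent p a j := by
  rw [ent_prime, if_neg hw]

lemma dset_prime (a : QStr p) : dset p (primeQ p a) = dset p a := by
  unfold dset
  apply Finset.filter_congr
  intro r _
  rw [ent_prime, ent_prime]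
  by_cases hw : 1 ≤ |r| ∧ |r| ≤ Tof p a
  · rw [if_pos hw, if_pos (by rwa [abs_neg])]
    simp only [ne_eq, neg_inj]
  · rw [if_neg hw, if_neg (by rw [abs_neg]; exact hw)]

lemma Tof_prime (a : QStr p) : Tof p (primeQ p a) = Tof p a := by
  rw [Tof_eq, Tof_eq, dset_prime]

lemma symB_primeQ (a : QStr p) : symB p (primeQ p a) ↔ symB p a := by
  rw [← Tof_eq_zero_iff, ← Tof_eq_zero_iff, Tof_prime]

lemma primeQ_primeQ (a : QStr p) : primeQ p (primeQ p a) = a := by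
  funext j
  show (if 1 ≤ |j.1| ∧ |j.1| ≤ Tof p (primeQ p a) then !(primeQ p a j) else primeQ p a j) = a j
  rw [Tof_prime]
  by_cases hw : 1 ≤ |j.1| ∧ |j.1| ≤ Tof p a
  · rw [if_pos hw]
    show (!(if 1 ≤ |j.1| ∧ |j.1| ≤ Tof p a then !(a j) else a j)) = a j
    rw [if_pos hw, Bool.not_not]
  · rw [if_neg hw]
    show (if 1 ≤ |j.1| ∧ |j.1| ≤ Tof p a then !(a j) else a j) = a j
    rw [if_neg hw]

lemma primeQ_eq_self {a : QStr p} (h : symB p a) : primeQ p a = a := by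
  have h0 := (Tof_eq_zero_iff p a).2 h
  funext j
  show (if 1 ≤ |j.1| ∧ |j.1| ≤ Tof p a then !(a j) else a j) = a j
  rw [if_neg (by rw [h0]; rintro ⟨h1, h2⟩; linarith)]

lemma primeQ_ne {a : QStr p} (h : ¬ symB p a) : primeQ p a ≠ a := by
  obtain ⟨hmem, -⟩ := Tof_spec p a h
  rw [Finset.mem_Icc] at hmem
  intro heq
  have hj : Tof p a ∈ Finset.Icc (-(p:ℤ)) (p:ℤ) := by rw [Finset.mem_Icc]; omega
  have hc := congrFun heq ⟨Tof p a, hj⟩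
  have habs : |Tof p a| = Tof p a := abs_of_pos (by omega)
  have hval : primeQ p a ⟨Tof p a, hj⟩ = !(a ⟨Tof p a, hj⟩) := by
    show (if 1 ≤ |Tof p a| ∧ |Tof p a| ≤ Tof p a then !(a ⟨Tof p a, hj⟩) else a ⟨Tof p a, hj⟩)
        = !(a ⟨Tof p a, hj⟩)
    rw [if_pos (by rw [habs]; omega)]
  rw [hval] at hc
  exact absurd hc (by simp)

lemma bket_neg_neg (x y b : ℝ) : bket (-x) (-y) b = bket x y b := by
  unfold bket
  simp only [neg_inj]

lemma bket_flip (x c b : ℝ) (hx : x = 1 ∨ x = -1) (hc : c = 1 ∨ c = -1) :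
    bket (-x) c b * bket c x (-b) = -(bket x c b * bket c (-x) (-b)) := by
  rcases hx with rfl | rfl <;> rcases hc with rfl | rfl <;>
    · norm_num [bket, Real.cos_neg, Real.sin_neg]
      push_cast
      ring

end Aux

noncomputable section Aux2

variable (p : ℕ) (β γ : ℕ → ℝ)

lemma fQ_prime (a : QStr p) (h : ¬ symB p a) : fQ p β (primeQ p a) = - fQ p β a := by
  obtain ⟨hmem, hne⟩ := Tof_spec p a h
  rw [Finset.mem_Icc] at hmem
  have htz : ((Tof p a).toNat : ℤ) = Tof p a := Int.toNat_of_nonneg (by omega)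
  set tn := (Tof p a).toNat with htndef
  have htmem : tn ∈ Finset.Icc 1 p := by rw [Finset.mem_Icc]; omega
  have key : ∀ b : QStr p, fQ p β b =
      (1/2 : ℂ) * ((bket (ent p b (tn : ℤ)) (ent p b (if tn = p then 0 else (tn : ℤ) + 1)) (β tn) *
        bket (ent p b (if tn = p then 0 else -((tn : ℤ) + 1))) (ent p b (-(tn : ℤ))) (-(β tn))) *
        ∏ r ∈ (Finset.Icc 1 p).erase tn,
          (bket (ent p b (r : ℤ)) (ent p b (if r = p then 0 else (r : ℤ) + 1)) (β r) *
            bket (ent p b (if r = p then 0 else -((r : ℤ) + 1))) (ent p b (-(r : ℤ))) (-(β r)))) := by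
    intro b
    unfold fQ
    rw [← Finset.mul_prod_erase _ _ htmem, mul_assoc]
  have hrest : ∀ r ∈ (Finset.Icc 1 p).erase tn,
      (bket (ent p (primeQ p a) (r : ℤ)) (ent p (primeQ p a) (if r = p then 0 else (r : ℤ) + 1)) (β r) *
        bket (ent p (primeQ p a) (if r = p then 0 else -((r : ℤ) + 1))) (ent p (primeQ p a) (-(r : ℤ))) (-(β r)))
      = (bket (ent p a (r : ℤ)) (ent p a (if r = p then 0 else (r : ℤ) + 1)) (β r) *
        bket (ent p a (if r = p then 0 else -((r : ℤ) + 1))) (ent p a (-(r : ℤ))) (-(β r))) := by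
    intro r hr
    rw [Finset.mem_erase, Finset.mem_Icc] at hr
    obtain ⟨hrne, hr1, hrp⟩ := hr
    have habs1 : |(r:ℤ)| = (r:ℤ) := abs_of_nonneg (by positivity)
    have habs2 : |(r:ℤ)+1| = (r:ℤ)+1 := abs_of_nonneg (by positivity)
    have habs3 : |(-(r:ℤ))| = (r:ℤ) := by rw [abs_neg, habs1]
    have habs4 : |(-((r:ℤ)+1))| = (r:ℤ)+1 := by rw [abs_neg, habs2]
    have hcast : (r : ℤ) ≠ Tof p a := by omega
    rcases lt_or_gt_of_ne hcast with hlt | hgt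
    · have hrnp : r ≠ p := by omega
      rw [if_neg hrnp, if_neg hrnp]
      rw [ent_prime_in p a (j := (r:ℤ)) (by rw [habs1]; omega),
          ent_prime_in p a (j := (r:ℤ)+1) (by rw [habs2]; omega),
          ent_prime_in p a (j := -((r:ℤ)+1)) (by rw [habs4]; omega),
          ent_prime_in p a (j := -(r:ℤ)) (by rw [habs3]; omega),
          bket_neg_neg, bket_neg_neg]
    · by_cases hrpeq : r = p
      · rw [if_pos hrpeq, if_pos hrpeq]
        rw [ent_prime_out p a (j := (r:ℤ)) (by rw [habs1]; omega),
            ent_prime_out p a (j := -(r:ℤ)) (by rw [habs3]; omega),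
            ent_prime_out p a (j := 0) (by norm_num)]
      · rw [if_neg hrpeq, if_neg hrpeq]
        rw [ent_prime_out p a (j := (r:ℤ)) (by rw [habs1]; omega),
            ent_prime_out p a (j := (r:ℤ)+1) (by rw [habs2]; omega),
            ent_prime_out p a (j := -((r:ℤ)+1)) (by rw [habs4]; omega),
            ent_prime_out p a (j := -(r:ℤ)) (by rw [habs3]; omega)]
  have habst : |(tn : ℤ)| = (tn : ℤ) := abs_of_nonneg (by positivity)
  have hvalneg : ent p a (-(tn:ℤ)) = - ent p a (tn:ℤ) := by
    rw [htz]
    exact ent_neg_of_ne p hne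
  have e1 : ent p (primeQ p a) (tn : ℤ) = - ent p a (tn : ℤ) :=
    ent_prime_in p a (by rw [habst]; omega)
  have e2 : ent p (primeQ p a) (-(tn : ℤ)) = - ent p a (-(tn : ℤ)) :=
    ent_prime_in p a (by rw [abs_neg, habst]; omega)
  have hmain :
      (bket (ent p (primeQ p a) (tn : ℤ)) (ent p (primeQ p a) (if tn = p then 0 else (tn : ℤ) + 1)) (β tn) *
        bket (ent p (primeQ p a) (if tn = p then 0 else -((tn : ℤ) + 1))) (ent p (primeQ p a) (-(tn : ℤ))) (-(β tn)))
      = -(bket (ent p a (tn : ℤ)) (ent p a (if tn = p then 0 else (tn : ℤ) + 1)) (β tn) *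
        bket (ent p a (if tn = p then 0 else -((tn : ℤ) + 1))) (ent p a (-(tn : ℤ))) (-(β tn))) := by
    by_cases hrpeq : tn = p
    · rw [if_pos hrpeq, if_pos hrpeq]
      have e3 : ent p (primeQ p a) 0 = ent p a 0 := ent_prime_out p a (by norm_num)
      rw [e1, e2, e3, hvalneg, neg_neg]
      exact bket_flip _ _ _ (ent_cases p a _) (ent_cases p a _)
    · rw [if_neg hrpeq, if_neg hrpeq]
      have habs2 : |(tn:ℤ)+1| = (tn:ℤ)+1 := abs_of_nonneg (by positivity)
      have e3 : ent p (primeQ p a) ((tn:ℤ)+1) = ent p a ((tn:ℤ)+1) :=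
        ent_prime_out p a (by rw [habs2]; omega)
      have e4 : ent p (primeQ p a) (-((tn:ℤ)+1)) = ent p a (-((tn:ℤ)+1)) :=
        ent_prime_out p a (by rw [abs_neg, habs2]; omega)
      have e5 : ent p a (-((tn:ℤ)+1)) = ent p a ((tn:ℤ)+1) := by
        have := Tof_lt_imp p a (r := (tn:ℤ)+1)
          (by rw [Finset.mem_Icc]; omega) (by omega)
        exact this.symm
      rw [e1, e2, e3, e4, e5, hvalneg, neg_neg]
      exact bket_flip _ _ _ (ent_cases p a _) (ent_cases p a _)
  rw [key (primeQ p a), key a, Finset.prod_congr rfl hrest, hmain]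
  ring

lemma Gam_zero : Gam γ 0 = 0 := by simp [Gam]

lemma Gam_neg (j : ℤ) : Gam γ (-j) = - Gam γ j := by
  unfold Gam
  rcases lt_trichotomy j 0 with h | h | h
  · rw [if_pos (by omega), if_neg (by omega), if_pos h, neg_neg]
  · subst h; norm_num
  · rw [if_neg (by omega), if_pos (by omega), if_pos h, neg_neg]

/-- the "outside the window" part of `Gdot` -/
def Us (t : ℤ) (a c : QStr p) : ℝ :=
  ∑ j ∈ (Finset.Icc (-(p:ℤ)) (p:ℤ)).filter (fun j => ¬ (1 ≤ |j| ∧ |j| ≤ t)),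
    Gam γ j * ent p a j * ent p c j

/-- the "inside the window" part of `Gdot` -/
def Vs (t : ℤ) (a c : QStr p) : ℝ :=
  ∑ j ∈ (Finset.Icc (-(p:ℤ)) (p:ℤ)).filter (fun j => (1 ≤ |j| ∧ |j| ≤ t)),
    Gam γ j * ent p a j * ent p c j

lemma Gdot_eq (t : ℤ) (a c : QStr p) :
    Gdot p γ a c = Vs p γ t a c + Us p γ t a c := by
  rw [Gdot, Vs, Us, Finset.sum_filter_add_sum_filter_not]

lemma Us_prime (a c : QStr p) :
    Us p γ (Tof p a) a (primeQ p c) = - Us p γ (Tof p a) a c := by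
  have key : ∑ j ∈ (Finset.Icc (-(p:ℤ)) (p:ℤ)).filter (fun j => ¬ (1 ≤ |j| ∧ |j| ≤ Tof p a)),
      (Gam γ j * ent p a j * ent p (primeQ p c) j + Gam γ j * ent p a j * ent p c j) = 0 := by
    apply Finset.sum_involution (fun j _ => -j)
    · intro j hj
      rw [Finset.mem_filter, Finset.mem_Icc] at hj
      obtain ⟨⟨hj1, hj2⟩, hjw⟩ := hj
      by_cases hj0 : j = 0
      · subst hj0
        simp [Gam_zero]
      · have habs1 : |j| ≤ (p:ℤ) := abs_le.2 ⟨hj1, hj2⟩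
        have habs2 : 1 ≤ |j| := Int.one_le_abs hj0
        have hgt : Tof p a < |j| := by
          by_contra hle
          exact hjw ⟨habs2, by omega⟩
        have ha := ent_eq_of_gt p a habs1 hgt
        have hgam := Gam_neg γ j
        by_cases hw : 1 ≤ |j| ∧ |j| ≤ Tof p c
        · have hc1 := ent_prime_in p c hw
          have hc2 := ent_prime_in p c (j := -j) (by rwa [abs_neg])
          rw [hc1, hc2, hgam, ha]
          ring
        · have hc1 := ent_prime_out p c hw
          have hc2 := ent_prime_out p c (j := -j) (by rw [abs_neg]; exact hw)
          have hgtc : Tof p c < |j| := by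
            by_contra hle
            exact hw ⟨habs2, by omega⟩
          have hc3 := ent_eq_of_gt p c habs1 hgtc
          rw [hc1, hc2, hgam, ha, hc3]
          ring
    · intro j hj hterm heq
      have hj0 : j = 0 := by omega
      subst hj0
      exact hterm (by simp [Gam_zero])
    · intro j hj
      exact neg_neg j
    · intro j hj
      rw [Finset.mem_filter, Finset.mem_Icc] at hj ⊢
      refine ⟨⟨by omega, by omega⟩, by rw [abs_neg]; exact hj.2⟩
  have hsplit : Us p γ (Tof p a) a (primeQ p c) + Us p γ (Tof p a) a c
      = ∑ j ∈ (Finset.Icc (-(p:ℤ)) (p:ℤ)).filter (fun j => ¬ (1 ≤ |j| ∧ |j| ≤ Tof p a)),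
        (Gam γ j * ent p a j * ent p (primeQ p c) j + Gam γ j * ent p a j * ent p c j) := by
    rw [Us, Us, ← Finset.sum_add_distrib]
  linarith [hsplit.trans key]

lemma Us_zero (a c : QStr p) (hlt : Tof p c < Tof p a) :
    Us p γ (Tof p a) a c = 0 := by
  rw [Us]
  apply Finset.sum_involution (fun j _ => -j)
  · intro j hj
    rw [Finset.mem_filter, Finset.mem_Icc] at hj
    obtain ⟨⟨hj1, hj2⟩, hjw⟩ := hj
    by_cases hj0 : j = 0
    · subst hj0
      simp [Gam_zero]
    · have habs1 : |j| ≤ (p:ℤ) := abs_le.2 ⟨hj1, hj2⟩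
      have habs2 : 1 ≤ |j| := Int.one_le_abs hj0
      have hgt : Tof p a < |j| := by
        by_contra hle
        exact hjw ⟨habs2, by omega⟩
      have ha := ent_eq_of_gt p a habs1 hgt
      have hc := ent_eq_of_gt p c habs1 (by omega)
      rw [Gam_neg, ha, hc]
      ring
  · intro j hj hterm heq
    have hj0 : j = 0 := by omega
    subst hj0
    exact hterm (by simp [Gam_zero])
  · intro j hj
    exact neg_neg j
  · intro j hj
    rw [Finset.mem_filter, Finset.mem_Icc] at hj ⊢
    refine ⟨⟨by omega, by omega⟩, by rw [abs_neg]; exact hj.2⟩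

lemma Vs_prime (a c : QStr p) (hle : Tof p a ≤ Tof p c) :
    Vs p γ (Tof p a) a (primeQ p c) = - Vs p γ (Tof p a) a c := by
  rw [Vs, Vs, ← Finset.sum_neg_distrib]
  apply Finset.sum_congr rfl
  intro j hj
  rw [Finset.mem_filter] at hj
  rw [ent_prime_in p c ⟨hj.2.1, hj.2.2.trans hle⟩]
  ring

lemma Vs_zero (a c : QStr p) (h0 : Tof p a = 0) : Vs p γ (Tof p a) a c = 0 := by
  rw [Vs]
  rw [Finset.filter_eq_empty_iff.2 (fun j _ => by rw [h0]; rintro ⟨h1, h2⟩; linarith)]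
  exact Finset.sum_empty

lemma Gdot_prime_left (a c : QStr p) :
    Gdot p γ (primeQ p a) c = - Vs p γ (Tof p a) a c + Us p γ (Tof p a) a c := by
  rw [Gdot_eq p γ (Tof p a) (primeQ p a) c]
  have h1 : Vs p γ (Tof p a) (primeQ p a) c = - Vs p γ (Tof p a) a c := by
    rw [Vs, Vs, ← Finset.sum_neg_distrib]
    apply Finset.sum_congr rfl
    intro j hj
    rw [Finset.mem_filter] at hj
    rw [ent_prime_in p a hj.2]
    ring
  have h2 : Us p γ (Tof p a) (primeQ p a) c = Us p γ (Tof p a) a c := by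
    rw [Us, Us]
    apply Finset.sum_congr rfl
    intro j hj
    rw [Finset.mem_filter] at hj
    rw [ent_prime_out p a hj.2]
  rw [h1, h2]

lemma Gdot_symm (a c : QStr p) (ha : symB p a) (hc : symB p c) : Gdot p γ a c = 0 := by
  rw [Gdot]
  apply Finset.sum_involution (fun j _ => -j)
  · intro j hj
    rw [Gam_neg, symB_ent_neg p ha, symB_ent_neg p hc]
    ring
  · intro j hj hterm heq
    have hj0 : j = 0 := by omega
    subst hj0
    exact hterm (by simp [Gam_zero])
  · intro j hj
    exact neg_neg j
  · intro j hj
    rw [Finset.mem_Icc] at hj ⊢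
    omega

lemma sum_prime (φ : QStr p → ℂ) (hφ : ∀ a, ¬ symB p a → φ (primeQ p a) = - φ a) :
    Finset.sum Finset.univ φ = Finset.sum (Finset.univ.filter (fun a => symB p a)) φ := by
  rw [← Finset.sum_filter_add_sum_filter_not Finset.univ (fun a => symB p a) φ]
  have h0 : ∑ a ∈ Finset.univ.filter (fun a => ¬ symB p a), φ a = 0 := by
    apply Finset.sum_involution (fun a _ => primeQ p a)
    · intro a ha
      rw [Finset.mem_filter] at ha
      rw [hφ a ha.2]
      ring
    · intro a ha hne
      rw [Finset.mem_filter] at ha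
      exact primeQ_ne p ha.2
    · intro a ha
      rw [Finset.mem_filter] at ha ⊢
      exact ⟨Finset.mem_univ _, fun hs => ha.2 ((symB_primeQ p a).1 hs)⟩
    · intro a ha
      exact primeQ_primeQ p a
  rw [h0, add_zero]

end Aux2

noncomputable section Aux3

variable (p : ℕ) (β γ : ℕ → ℝ)

lemma Hinf_succ (m : ℕ) (a : QStr p) :
    Hinf p β γ (m+1) a = Complex.exp (-(1 / 2 : ℂ) *
      ∑ b : QStr p, fQ p β b * Hinf p β γ m b * ((Gdot p γ a b) ^ 2 : ℝ)) := rfl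

lemma H_prime (m : ℕ) : ∀ a : QStr p, Hinf p β γ m (primeQ p a) = Hinf p β γ m a := by
  induction m with
  | zero => intro a; rfl
  | succ m IH =>
    intro a
    by_cases hs : symB p a
    · rw [primeQ_eq_self p hs]
    · have ht1 : 1 ≤ Tof p a := by
        have := (Tof_spec p a hs).1
        rw [Finset.mem_Icc] at this
        omega
      have hinv : ∀ c, ¬ symB p c →
          (fun b => fQ p β b * Hinf p β γ m b *
            ((Us p γ (Tof p a) a b * Vs p γ (Tof p a) a b : ℝ) : ℂ)) (primeQ p c)
          = - (fun b => fQ p β b * Hinf p β γ m b *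
            ((Us p γ (Tof p a) a b * Vs p γ (Tof p a) a b : ℝ) : ℂ)) c := by
        intro c hc
        simp only
        rw [fQ_prime p β c hc, IH c, Us_prime p γ a c]
        by_cases hcmp : Tof p a ≤ Tof p c
        · rw [Vs_prime p γ a c hcmp]
          push_cast
          ring
        · rw [Us_zero p γ a c (by omega)]
          push_cast
          ring
      have key : ∑ b : QStr p, fQ p β b * Hinf p β γ m b *
          ((Us p γ (Tof p a) a b * Vs p γ (Tof p a) a b : ℝ) : ℂ) = 0 := by
        rw [sum_prime p _ hinv]
        apply Finset.sum_eq_zero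
        intro c hcf
        rw [Finset.mem_filter] at hcf
        have h0 : Tof p c = 0 := (Tof_eq_zero_iff p c).2 hcf.2
        rw [Us_zero p γ a c (by omega)]
        norm_num
      have hsum : (∑ b : QStr p, fQ p β b * Hinf p β γ m b * ((Gdot p γ (primeQ p a) b) ^ 2 : ℝ))
          = ∑ b : QStr p, fQ p β b * Hinf p β γ m b * ((Gdot p γ a b) ^ 2 : ℝ) := by
        have step : ∀ b : QStr p,
            fQ p β b * Hinf p β γ m b * (((Gdot p γ (primeQ p a) b) ^ 2 : ℝ) : ℂ)
            = fQ p β b * Hinf p β γ m b * (((Gdot p γ a b) ^ 2 : ℝ) : ℂ)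
              + (-4 : ℂ) * (fQ p β b * Hinf p β γ m b *
                ((Us p γ (Tof p a) a b * Vs p γ (Tof p a) a b : ℝ) : ℂ)) := by
          intro b
          rw [Gdot_prime_left p γ a b, Gdot_eq p γ (Tof p a) a b]
          push_cast
          ring
        rw [Finset.sum_congr rfl (fun b _ => step b), Finset.sum_add_distrib,
          ← Finset.mul_sum, key, mul_zero, add_zero]
      rw [Hinf_succ p β γ m (primeQ p a), Hinf_succ p β γ m a, hsum]

lemma H_symB (m : ℕ) (a : QStr p) (ha : symB p a) : Hinf p β γ m a = 1 := by
  induction m with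
  | zero => rfl
  | succ m IH =>
    have h0 : Tof p a = 0 := (Tof_eq_zero_iff p a).2 ha
    have hinv : ∀ c, ¬ symB p c →
        (fun c => fQ p β c * Hinf p β γ m c * (((Gdot p γ a c) ^ 2 : ℝ) : ℂ)) (primeQ p c)
        = - (fun c => fQ p β c * Hinf p β γ m c * (((Gdot p γ a c) ^ 2 : ℝ) : ℂ)) c := by
      intro c hc
      have hG : Gdot p γ a (primeQ p c) = - Gdot p γ a c := by
        rw [Gdot_eq p γ (Tof p a) a (primeQ p c), Gdot_eq p γ (Tof p a) a c,
          Vs_zero p γ a (primeQ p c) h0, Vs_zero p γ a c h0, Us_prime p γ a c]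
        ring
      simp only
      rw [fQ_prime p β c hc, H_prime p β γ m c, hG]
      push_cast
      ring
    have key : ∑ c : QStr p, fQ p β c * Hinf p β γ m c * (((Gdot p γ a c) ^ 2 : ℝ) : ℂ) = 0 := by
      rw [sum_prime p _ hinv]
      apply Finset.sum_eq_zero
      intro c hcf
      rw [Finset.mem_filter] at hcf
      rw [Gdot_symm p γ a c ha hcf.2]
      norm_num
    rw [Hinf_succ, key, mul_zero, Complex.exp_zero]

end Aux3

noncomputable section Aux4

variable (p : ℕ) (β γ : ℕ → ℝ)

/-- ±1 value of a Bool. -/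
def brl (b : Bool) : ℝ := if b then 1 else -1

lemma ent_eq_br (a : QStr p) {j : ℤ} (hj : j ∈ Finset.Icc (-(p:ℤ)) (p:ℤ)) :
    ent p a j = brl (a ⟨j, hj⟩) := by
  unfold ent brl
  rw [dif_pos hj]

lemma ent_inj (a : QStr p) {i j : ℤ} (hi : i ∈ Finset.Icc (-(p:ℤ)) (p:ℤ))
    (hj : j ∈ Finset.Icc (-(p:ℤ)) (p:ℤ)) (h : ent p a i = ent p a j) :
    a ⟨i, hi⟩ = a ⟨j, hj⟩ := by
  rw [ent_eq_br p a hi, ent_eq_br p a hj] at h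
  unfold brl at h
  cases hx : a ⟨i, hi⟩ <;> cases hy : a ⟨j, hj⟩ <;> rw [hx, hy] at h <;> norm_num at h <;> rfl

lemma chainW (n : ℕ) : ∀ (W : ℕ → Bool → Bool → ℂ), (∀ i y, W i true y + W i false y = 1) →
    ∑ v : Fin (n+1) → Bool, ∏ i : Fin n, W (i : ℕ) (v i.castSucc) (v i.succ) = 2 := by
  induction n with
  | zero =>
    intro W hW
    simp
  | succ n IH =>
    intro W hW
    have hsplit : ∀ v : Fin (n+2) → Bool,
        (∏ i : Fin (n+1), W (i:ℕ) (v i.castSucc) (v i.succ)) =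
          W 0 (v 0) (v 1) *
            ∏ i : Fin n, W ((i:ℕ)+1) ((Fin.tail v) i.castSucc) ((Fin.tail v) i.succ) := by
      intro v
      rw [Fin.prod_univ_succ]
      congr 1
    calc ∑ v : Fin (n+2) → Bool, ∏ i : Fin (n+1), W (i:ℕ) (v i.castSucc) (v i.succ)
        = ∑ v : Fin (n+2) → Bool, W 0 (v 0) (v 1) *
            ∏ i : Fin n, W ((i:ℕ)+1) ((Fin.tail v) i.castSucc) ((Fin.tail v) i.succ) :=
          Finset.sum_congr rfl (fun v _ => hsplit v)
      _ = ∑ q : Bool × (Fin (n+1) → Bool), W 0 q.1 (q.2 0) *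
            ∏ i : Fin n, W ((i:ℕ)+1) (q.2 i.castSucc) (q.2 i.succ) := by
          apply Fintype.sum_equiv (Fin.consEquiv (fun _ : Fin (n+2) => Bool)).symm
          intro v
          rfl
      _ = ∑ u : Fin (n+1) → Bool, ∑ x : Bool, W 0 x (u 0) *
            ∏ i : Fin n, W ((i:ℕ)+1) (u i.castSucc) (u i.succ) := by
          rw [Fintype.sum_prod_type_right]
      _ = ∑ u : Fin (n+1) → Bool, (∑ x : Bool, W 0 x (u 0)) *
            ∏ i : Fin n, W ((i:ℕ)+1) (u i.castSucc) (u i.succ) := by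
          apply Finset.sum_congr rfl
          intro u _
          rw [Finset.sum_mul]
      _ = ∑ u : Fin (n+1) → Bool, ∏ i : Fin n, W ((i:ℕ)+1) (u i.castSucc) (u i.succ) := by
          apply Finset.sum_congr rfl
          intro u _
          have h1 : ∑ x : Bool, W 0 x (u 0) = 1 := by
            rw [Fintype.sum_bool]
            exact hW 0 (u 0)
          rw [h1, one_mul]
      _ = 2 := IH (fun i => W (i+1)) (fun i y => hW (i+1) y)

/-- forward map from symmetric strings to vertex labels of the chain -/
def toV (a : QStr p) : Fin (p+1) → Bool := fun i =>
  if h : (i : ℕ) < p then a ⟨((i:ℕ)+1 : ℤ), by rw [Finset.mem_Icc]; constructor <;> omega⟩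
  else a ⟨0, by rw [Finset.mem_Icc]; constructor <;> omega⟩

/-- backward map -/
def ofV (v : Fin (p+1) → Bool) : QStr p := fun j =>
  if h : 1 ≤ |j.1| then
    v ⟨(|j.1|).toNat - 1, by
      have h2 := j.2
      rw [Finset.mem_Icc] at h2
      have h3 : |j.1| ≤ (p:ℤ) := abs_le.2 h2
      omega⟩
  else v (Fin.last p)

lemma ofV_pos (v : Fin (p+1) → Bool) {j : ℤ} (hj : j ∈ Finset.Icc (-(p:ℤ)) (p:ℤ))
    (h1 : 1 ≤ |j|) {k : ℕ} (hk : k < p + 1) (hkey : (k : ℤ) = |j| - 1) :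
    ofV p v ⟨j, hj⟩ = v ⟨k, hk⟩ := by
  simp only [ofV]
  rw [dif_pos h1]
  congr 1
  ext
  show (|j|).toNat - 1 = k
  omega

lemma ofV_zero (v : Fin (p+1) → Bool) {j : ℤ} (hj : j ∈ Finset.Icc (-(p:ℤ)) (p:ℤ))
    (h1 : ¬ 1 ≤ |j|) : ofV p v ⟨j, hj⟩ = v (Fin.last p) := by
  simp only [ofV]
  rw [dif_neg h1]

lemma toV_lt (a : QStr p) {i : Fin (p+1)} (hi : (i : ℕ) < p) {j : ℤ}
    (hj : j ∈ Finset.Icc (-(p:ℤ)) (p:ℤ)) (hkey : j = ((i : ℕ) : ℤ) + 1) :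
    toV p a i = a ⟨j, hj⟩ := by
  simp only [toV]
  rw [dif_pos hi]
  exact congrArg a (Subtype.ext hkey.symm)

lemma toV_last (a : QStr p) {i : Fin (p+1)} (hi : ¬ (i : ℕ) < p)
    (hz : (0:ℤ) ∈ Finset.Icc (-(p:ℤ)) (p:ℤ)) :
    toV p a i = a ⟨0, hz⟩ := by
  simp only [toV]
  rw [dif_neg hi]

lemma sum_symB_fQ :
    ∑ a ∈ Finset.univ.filter (fun a => symB p a), fQ p β a = 1 := by
  classical
  set W : ℕ → Bool → Bool → ℂ := fun i x y =>
    bket (brl x) (brl y) (β (i+1)) * bket (brl y) (brl x) (-(β (i+1))) with hWdef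
  have hWsum : ∀ i y, W i true y + W i false y = 1 := by
    intro i y
    have hpyth : Complex.sin ((β (i+1) : ℝ) : ℂ)^2 + Complex.cos ((β (i+1) : ℝ) : ℂ)^2 = 1 :=
      Complex.sin_sq_add_cos_sq _
    cases y <;>
      · simp only [hWdef, brl, bket, if_true, if_false]
        norm_num [Real.cos_neg, Real.sin_neg]
        push_cast
        linear_combination hpyth - Complex.sin ((β (i+1) : ℝ) : ℂ)^2 * Complex.I_sq
  have hbij : ∑ a ∈ Finset.univ.filter (fun a => symB p a), fQ p β a
      = ∑ v : Fin (p+1) → Bool, (1/2 : ℂ) * ∏ i : Fin p, W (i:ℕ) (v i.castSucc) (v i.succ) := by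
    refine Finset.sum_bij' (i := fun a _ => toV p a) (j := fun v _ => ofV p v) ?_ ?_ ?_ ?_ ?_
    · intro a _
      exact Finset.mem_univ _
    · intro v _
      rw [Finset.mem_filter]
      refine ⟨Finset.mem_univ _, ?_⟩
      intro r hr
      beta_reduce
      rw [Finset.mem_Icc] at hr
      have hmr : -r ∈ Finset.Icc (-(p:ℤ)) (p:ℤ) := by rw [Finset.mem_Icc]; omega
      have hpr : r ∈ Finset.Icc (-(p:ℤ)) (p:ℤ) := by rw [Finset.mem_Icc]; omega
      have habs : |(-r)| = r := by rw [abs_neg]; exact abs_of_pos (by omega)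
      have habs2 : |r| = r := abs_of_pos (by omega)
      have hk : r.toNat - 1 < p + 1 := by omega
      rw [ent_eq_br p _ hmr, ent_eq_br p _ hpr,
          ofV_pos p v hmr (by rw [habs]; omega) hk (by rw [habs]; omega),
          ofV_pos p v hpr (by rw [habs2]; omega) hk (by rw [habs2]; omega)]
    · intro a ha
      rw [Finset.mem_filter] at ha
      beta_reduce
      funext j
      obtain ⟨jv, hjmem⟩ := j
      have h2 := hjmem
      rw [Finset.mem_Icc] at h2
      by_cases h1 : 1 ≤ |jv|
      · have h3 : |jv| ≤ (p:ℤ) := abs_le.2 h2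
        have hk : (|jv|).toNat - 1 < p + 1 := by omega
        rw [ofV_pos p (toV p a) hjmem h1 hk (by omega)]
        have hanonneg := abs_nonneg jv
        have habsmem : |jv| ∈ Finset.Icc (-(p:ℤ)) (p:ℤ) := by rw [Finset.mem_Icc]; omega
        rw [toV_lt p a (i := ⟨(|jv|).toNat - 1, hk⟩) (by show (|jv|).toNat - 1 < p; omega)
          habsmem (by show |jv| = (((|jv|).toNat - 1 : ℕ) : ℤ) + 1; omega)]
        rcases le_or_gt 0 jv with hsgn | hsgn
        · exact congrArg a (Subtype.ext (abs_of_nonneg hsgn))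
        · exact ent_inj p a habsmem hjmem
            (by rw [abs_of_neg hsgn]; exact symB_ent_neg p ha.2 jv)
      · rw [ofV_zero p (toV p a) hjmem h1]
        have hj0 : jv = 0 := by
          have h4 := abs_nonneg jv
          have h5 : |jv| < 1 := not_le.1 h1
          have h6 : |jv| = 0 := le_antisymm (by linarith) h4
          exact abs_eq_zero.1 h6
        rw [toV_last p a (by simp) (by rw [Finset.mem_Icc]; constructor <;> omega)]
        exact congrArg a (Subtype.ext hj0.symm)
    · intro v _
      beta_reduce
      funext i
      by_cases hi : (i:ℕ) < p
      · have hmem : (((i:ℕ):ℤ)+1) ∈ Finset.Icc (-(p:ℤ)) (p:ℤ) := by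
          rw [Finset.mem_Icc]
          constructor <;> omega
        have habs : |((i:ℕ):ℤ)+1| = ((i:ℕ):ℤ)+1 := abs_of_pos (by positivity)
        rw [toV_lt p (ofV p v) hi hmem rfl,
            ofV_pos p v hmem (by rw [habs]; omega) (k := (i:ℕ)) i.2 (by rw [habs]; omega)]
      · rw [toV_last p (ofV p v) hi (by rw [Finset.mem_Icc]; constructor <;> omega),
            ofV_zero p v _ (by norm_num)]
        have hlast : i = Fin.last p := by
          ext
          simp only [Fin.val_last]
          omega
        rw [hlast]
    · intro a ha
      beta_reduce
      rw [Finset.mem_filter] at ha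
      unfold fQ
      congr 1
      refine Finset.prod_bij'
        (i := fun r hr => (⟨r - 1, by rw [Finset.mem_Icc] at hr; omega⟩ : Fin p))
        (j := fun i _ => (i : ℕ) + 1) ?_ ?_ ?_ ?_ ?_
      · intro r _
        exact Finset.mem_univ _
      · intro i _
        beta_reduce
        rw [Finset.mem_Icc]
        have := i.isLt
        omega
      · intro r hr
        rw [Finset.mem_Icc] at hr
        show (r - 1) + 1 = r
        omega
      · intro i _
        ext
        simp
      · intro r hr
        beta_reduce
        rw [Finset.mem_Icc] at hr
        obtain ⟨hr1, hrp⟩ := hr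
        have hrf : r - 1 < p := by omega
        have hmemr : ((r:ℕ):ℤ) ∈ Finset.Icc (-(p:ℤ)) (p:ℤ) := by
          rw [Finset.mem_Icc]; constructor <;> omega
        have hcslt : (((⟨r - 1, hrf⟩ : Fin p).castSucc : Fin (p+1)) : ℕ) < p := by
          show r - 1 < p
          omega
        have e1 : toV p a ((⟨r - 1, hrf⟩ : Fin p).castSucc) = a ⟨((r:ℕ):ℤ), hmemr⟩ :=
          toV_lt p a hcslt hmemr (by show ((r:ℕ):ℤ) = ((r - 1 : ℕ) : ℤ) + 1; omega)
        have hWidx : (((⟨r - 1, hrf⟩ : Fin p) : ℕ)) + 1 = r := by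
          show (r - 1) + 1 = r
          omega
        have e3 : ent p a (-((r:ℕ):ℤ)) = ent p a ((r:ℕ):ℤ) := symB_ent_neg p ha.2 _
        by_cases hrpeq : r = p
        · rw [if_pos hrpeq, if_pos hrpeq]
          have hmem0 : (0:ℤ) ∈ Finset.Icc (-(p:ℤ)) (p:ℤ) := by
            rw [Finset.mem_Icc]; constructor <;> omega
          have e2 : toV p a ((⟨r - 1, hrf⟩ : Fin p).succ) = a ⟨0, hmem0⟩ :=
            toV_last p a (by show ¬ ((r-1)+1 < p); omega) hmem0
          rw [e3, ent_eq_br p a hmemr, ent_eq_br p a hmem0, hWdef]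
          simp only [e1, e2, hWidx]
        · rw [if_neg hrpeq, if_neg hrpeq]
          have hmem1 : ((r:ℕ):ℤ)+1 ∈ Finset.Icc (-(p:ℤ)) (p:ℤ) := by
            rw [Finset.mem_Icc]; constructor <;> omega
          have e2 : toV p a ((⟨r - 1, hrf⟩ : Fin p).succ) = a ⟨((r:ℕ):ℤ)+1, hmem1⟩ :=
            toV_lt p a (by show (r-1)+1 < p; omega) hmem1
              (by show ((r:ℕ):ℤ)+1 = (((r - 1 : ℕ) + 1 : ℕ) : ℤ) + 1; omega)
          have e4 : ent p a (-(((r:ℕ):ℤ)+1)) = ent p a (((r:ℕ):ℤ)+1) := symB_ent_neg p ha.2 _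
          rw [e3, e4, ent_eq_br p a hmemr, ent_eq_br p a hmem1, hWdef]
          simp only [e1, e2, hWidx]
  rw [hbij, ← Finset.mul_sum, chainW p W hWsum]
  norm_num

end Aux4


/-- G^{(m)}_{j,j} = 1 and G^{(m)}_{j,-j} = 1. -/
theorem stmt_14 (p : ℕ) (hp : 1 ≤ p) (β γ : ℕ → ℝ) (m : ℕ) (hm : m ≤ p)
    (j : ℤ) (hj : j ∈ Finset.Icc (-(p : ℤ)) (p : ℤ)) :
    GmatH p β γ m j j = 1 ∧ GmatH p β γ m j (-j) = 1 := by
  constructor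
  · unfold GmatH
    have h1 : ∀ a : QStr p, fQ p β a * Hinf p β γ m a * (ent p a j : ℂ) * (ent p a j : ℂ)
        = fQ p β a * Hinf p β γ m a := by
      intro a
      have h2 : (ent p a j : ℂ) * (ent p a j : ℂ) = 1 := by
        rw [← Complex.ofReal_mul, ent_mul_self p a j, Complex.ofReal_one]
      rw [mul_assoc, h2, mul_one]
    rw [Finset.sum_congr rfl (fun a _ => h1 a)]
    rw [sum_prime p (fun a => fQ p β a * Hinf p β γ m a)
      (fun a ha => by beta_reduce; rw [fQ_prime p β a ha, H_prime p β γ m a]; ring)]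
    calc ∑ a ∈ Finset.univ.filter (fun a => symB p a), fQ p β a * Hinf p β γ m a
        = ∑ a ∈ Finset.univ.filter (fun a => symB p a), fQ p β a := by
          apply Finset.sum_congr rfl
          intro a ha
          rw [Finset.mem_filter] at ha
          rw [H_symB p β γ m a ha.2, mul_one]
      _ = 1 := sum_symB_fQ p β
  · unfold GmatH
    have h1 : ∀ a : QStr p, fQ p β a * Hinf p β γ m a * (ent p a j : ℂ) * (ent p a (-j) : ℂ)
        = fQ p β a * Hinf p β γ m a * ((ent p a j * ent p a (-j) : ℝ) : ℂ) := by
      intro a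
      push_cast
      ring
    rw [Finset.sum_congr rfl (fun a _ => h1 a)]
    have hinv : ∀ a, ¬ symB p a →
        (fun a => fQ p β a * Hinf p β γ m a * ((ent p a j * ent p a (-j) : ℝ) : ℂ)) (primeQ p a)
        = - (fun a => fQ p β a * Hinf p β γ m a * ((ent p a j * ent p a (-j) : ℝ) : ℂ)) a := by
      intro a ha
      have hent : ent p (primeQ p a) j * ent p (primeQ p a) (-j)
          = ent p a j * ent p a (-j) := by
        rw [ent_prime p a j, ent_prime p a (-j)]
        by_cases hw : 1 ≤ |j| ∧ |j| ≤ Tof p a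
        · rw [if_pos hw, if_pos (by rwa [abs_neg])]
          ring
        · rw [if_neg hw, if_neg (by rw [abs_neg]; exact hw)]
      simp only
      rw [fQ_prime p β a ha, H_prime p β γ m a, hent]
      ring
    rw [sum_prime p _ hinv]
    calc ∑ a ∈ Finset.univ.filter (fun a => symB p a),
          fQ p β a * Hinf p β γ m a * ((ent p a j * ent p a (-j) : ℝ) : ℂ)
        = ∑ a ∈ Finset.univ.filter (fun a => symB p a), fQ p β a := by
          apply Finset.sum_congr rfl
          intro a ha
          rw [Finset.mem_filter] at ha
          rw [H_symB p β γ m a ha.2, symB_ent_neg p ha.2 j, ent_mul_self p a j,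
            Complex.ofReal_one, mul_one, mul_one]
      _ = 1 := sum_symB_fQ p β
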